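/- If ν : ℝ → ℝ is bounded, smooth, and ν(σ) → ν₀⁻ as σ → -∞ and ν(σ) → ν₀⁺ as σ → +∞ with ν₀⁻ > ν₀⁺, then for fixed ω > 0, h₀(σ,ω) - R(σ/(2√ω)) → 0 as |σ| → ∞, where h₀ is the heat evolution of ν and R(z) = ν₀⁻ erfc(z) + ν₀⁺ erfc(-z). -/

import Mathlib

open Real MeasureTheory Filter

noncomputable def h0 (ν : ℝ → ℝ) (σ ω : ℝ) : ℝ :=
  (1 / (2 * Real.sqrt (π * ω))) * ∫ s : ℝ, ν s * Real.exp (-(σ - s) ^ 2 / (4 * ω))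

noncomputable def erfc (z : ℝ) : ℝ :=
  (1 / Real.sqrt π) * ∫ y in Set.Ioi z, Real.exp (-y ^ 2)

lemma int_Ioi_add (F : ℝ → ℝ) (a d : ℝ) :
    ∫ x in Set.Ioi a, F (x + d) = ∫ x in Set.Ioi (a + d), F x := by
  have h := (measurePreserving_add_right (volume : Measure ℝ) d).setIntegral_preimage_emb
    (measurableEmbedding_addRight d) F (Set.Ioi (a + d))
  simpa using h

lemma int_Iic_add (F : ℝ → ℝ) (a d : ℝ) :
    ∫ x in Set.Iic a, F (x + d) = ∫ x in Set.Iic (a + d), F x := by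
  have h := (measurePreserving_add_right (volume : Measure ℝ) d).setIntegral_preimage_emb
    (measurableEmbedding_addRight d) F (Set.Iic (a + d))
  simpa using h

lemma gauss_Iic (c : ℝ) (hc : 0 < c) (σ : ℝ) :
    ∫ s in Set.Iic (0:ℝ), Real.exp (-((σ - s)/c)^2)
      = c * ∫ y in Set.Ioi (σ/c), Real.exp (-y^2) := by
  have h1 := integral_comp_neg_Iic (0:ℝ) (fun x => Real.exp (-((x + σ)/c)^2))
  simp only [neg_add_eq_sub, neg_zero] at h1
  rw [h1, int_Ioi_add (fun x => Real.exp (-(x/c)^2)) 0 σ, zero_add]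
  have h2 := integral_comp_mul_left_Ioi (fun y => Real.exp (-y^2)) σ (inv_pos.mpr hc)
  simp only [smul_eq_mul, inv_inv] at h2
  rw [show (fun x : ℝ => Real.exp (-(x/c)^2)) = fun x => Real.exp (-(c⁻¹ * x)^2) by
    funext x; rw [inv_mul_eq_div], h2, inv_mul_eq_div]

lemma gauss_Ioi (c : ℝ) (hc : 0 < c) (σ : ℝ) :
    ∫ s in Set.Ioi (0:ℝ), Real.exp (-((σ - s)/c)^2)
      = c * ∫ y in Set.Ioi (-(σ/c)), Real.exp (-y^2) := by
  have h1 := integral_comp_neg_Ioi (0:ℝ) (fun x => Real.exp (-((x + σ)/c)^2))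
  simp only [neg_add_eq_sub, neg_zero] at h1
  rw [h1, int_Iic_add (fun x => Real.exp (-(x/c)^2)) 0 σ, zero_add]
  have h2 := integral_comp_neg_Iic σ (fun x => Real.exp (-(x/c)^2))
  simp only [neg_div, neg_neg, neg_sq] at h2 ⊢
  rw [h2]
  have h3 := integral_comp_mul_left_Ioi (fun y => Real.exp (-y^2)) (-σ) (inv_pos.mpr hc)
  simp only [smul_eq_mul, inv_inv] at h3
  rw [show (fun x : ℝ => Real.exp (-(x/c)^2)) = fun x => Real.exp (-(c⁻¹ * x)^2) by
    funext x; rw [inv_mul_eq_div], h3]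
  congr 2
  rw [inv_mul_eq_div, neg_div]

lemma gauss_integrable (c : ℝ) (hc : 0 < c) :
    Integrable (fun t : ℝ => Real.exp (-(t/c)^2)) := by
  have h := integrable_exp_neg_mul_sq (show (0:ℝ) < (c^2)⁻¹ by positivity)
  refine h.congr ?_
  filter_upwards with t
  congr 1
  rw [div_pow]
  ring

theorem stmt_15 (ν : ℝ → ℝ) (hsmooth : ContDiff ℝ (⊤ : ℕ∞) ν) (M : ℝ) (hbdd : ∀ s, |ν s| ≤ M)
    (ν₀m ν₀p : ℝ) (hm : Tendsto ν atBot (nhds ν₀m)) (hp : Tendsto ν atTop (nhds ν₀p))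
    (hlt : ν₀p < ν₀m) (ω : ℝ) (hω : 0 < ω) :
    Tendsto (fun σ : ℝ =>
        h0 ν σ ω - (ν₀m * erfc (σ / (2 * Real.sqrt ω)) + ν₀p * erfc (-(σ / (2 * Real.sqrt ω)))))
      (cocompact ℝ) (nhds 0) := by
  set c : ℝ := 2 * Real.sqrt ω with hc_def
  have hsω : 0 < Real.sqrt ω := Real.sqrt_pos.mpr hω
  have hc : 0 < c := by positivity
  have hc2 : c ^ 2 = 4 * ω := by
    rw [hc_def, mul_pow, Real.sq_sqrt hω.le]; ring
  -- the kernel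
  set φ : ℝ → ℝ := fun t => Real.exp (-(t/c)^2) with hφ_def
  have hφ_eq : ∀ t : ℝ, Real.exp (-t^2 / (4*ω)) = φ t := by
    intro t; simp only [hφ_def]; congr 1; rw [div_pow, hc2, neg_div]
  have hφ_int : Integrable φ := gauss_integrable c hc
  have hφ_nonneg : ∀ t, 0 ≤ φ t := fun t => (Real.exp_pos _).le
  have hφ_meas : Measurable φ := by
    apply Measurable.exp; fun_prop
  -- step function
  set g : ℝ → ℝ := fun s => if s ≤ 0 then ν₀m else ν₀p with hg_def
  have hg_meas : Measurable g := Measurable.ite measurableSet_Iic measurable_const measurable_const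
  set Mg : ℝ := |ν₀m| + |ν₀p| with hMg_def
  have hg_bdd : ∀ s, |g s| ≤ Mg := by
    intro s
    simp only [hg_def]
    split_ifs
    · simp [hMg_def, abs_nonneg]
    · simp only [hMg_def]; linarith [abs_nonneg ν₀m]
  -- f = ν - g
  set f : ℝ → ℝ := fun s => ν s - g s with hf_def
  have hf_meas : Measurable f := (hsmooth.continuous.measurable).sub hg_meas
  have hf_bdd : ∀ s, |f s| ≤ M + Mg := by
    intro s
    calc |ν s - g s| ≤ |ν s| + |g s| := abs_sub _ _
      _ ≤ M + Mg := add_le_add (hbdd s) (hg_bdd s)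
  -- constant
  set C : ℝ := 1 / (2 * Real.sqrt (π * ω)) with hC_def
  have hCc : C * c = 1 / Real.sqrt π := by
    have hπ : 0 < Real.sqrt π := Real.sqrt_pos.mpr Real.pi_pos
    rw [hC_def, hc_def, Real.sqrt_mul Real.pi_pos.le]
    field_simp
  -- integrability
  have hKσ_int : ∀ σ : ℝ, Integrable (fun s => φ (σ - s)) := fun σ => hφ_int.comp_sub_left σ
  have hν_int : ∀ σ : ℝ, Integrable (fun s => ν s * φ (σ - s)) := fun σ =>
    (hKσ_int σ).bdd_mul (c := M) hsmooth.continuous.measurable.aestronglyMeasurable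
      (Filter.Eventually.of_forall fun s => by rw [Real.norm_eq_abs]; exact hbdd s)
  have hgφ_int : ∀ σ : ℝ, Integrable (fun s => g s * φ (σ - s)) := fun σ =>
    (hKσ_int σ).bdd_mul (c := Mg) hg_meas.aestronglyMeasurable
      (Filter.Eventually.of_forall fun s => by rw [Real.norm_eq_abs]; exact hg_bdd s)
  have hfφ_int : ∀ σ : ℝ, Integrable (fun s => f s * φ (σ - s)) := fun σ =>
    (hKσ_int σ).bdd_mul (c := M + Mg) hf_meas.aestronglyMeasurable
      (Filter.Eventually.of_forall fun s => by rw [Real.norm_eq_abs]; exact hf_bdd s)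
  -- step-function integral
  have hgint : ∀ σ : ℝ, C * ∫ s, g s * φ (σ - s)
      = ν₀m * erfc (σ/c) + ν₀p * erfc (-(σ/c)) := by
    intro σ
    have split := intervalIntegral.integral_Iic_add_Ioi (b := (0:ℝ)) (μ := volume)
      ((hgφ_int σ).integrableOn) ((hgφ_int σ).integrableOn)
    rw [← split]
    have e1 : ∫ s in Set.Iic (0:ℝ), g s * φ (σ - s) = ν₀m * (c * ∫ y in Set.Ioi (σ/c), Real.exp (-y^2)) := by
      rw [show ∫ s in Set.Iic (0:ℝ), g s * φ (σ - s) = ∫ s in Set.Iic (0:ℝ), ν₀m * φ (σ - s) from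
        setIntegral_congr_fun measurableSet_Iic (fun s hs => by
          simp only [hg_def, if_pos (Set.mem_Iic.mp hs)]),
        integral_const_mul, ← gauss_Iic c hc σ]
    have e2 : ∫ s in Set.Ioi (0:ℝ), g s * φ (σ - s) = ν₀p * (c * ∫ y in Set.Ioi (-(σ/c)), Real.exp (-y^2)) := by
      rw [show ∫ s in Set.Ioi (0:ℝ), g s * φ (σ - s) = ∫ s in Set.Ioi (0:ℝ), ν₀p * φ (σ - s) from
        setIntegral_congr_fun measurableSet_Ioi (fun s hs => by
          simp only [hg_def, if_neg (not_le.mpr (Set.mem_Ioi.mp hs))]),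
        integral_const_mul, ← gauss_Ioi c hc σ]
    rw [e1, e2, erfc, erfc]
    have h1s : C * (ν₀m * (c * ∫ y in Set.Ioi (σ/c), Real.exp (-y^2))
        + ν₀p * (c * ∫ y in Set.Ioi (-(σ/c)), Real.exp (-y^2)))
        = ν₀m * ((C * c) * ∫ y in Set.Ioi (σ/c), Real.exp (-y^2))
        + ν₀p * ((C * c) * ∫ y in Set.Ioi (-(σ/c)), Real.exp (-y^2)) := by ring
    rw [h1s, hCc]
  -- key identity
  have key : ∀ σ : ℝ,
      h0 ν σ ω - (ν₀m * erfc (σ/c) + ν₀p * erfc (-(σ/c))) = C * ∫ s, f s * φ (σ - s) := by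
    intro σ
    have hsub : ∫ s, f s * φ (σ - s) = (∫ s, ν s * φ (σ - s)) - ∫ s, g s * φ (σ - s) := by
      rw [← integral_sub (hν_int σ) (hgφ_int σ)]
      congr 1; funext s; simp only [hf_def]; ring
    have hh0 : h0 ν σ ω = C * ∫ s, ν s * φ (σ - s) := by
      rw [h0, ← hC_def]
      congr 1
      refine integral_congr_ae (Filter.Eventually.of_forall fun s => ?_)
      simp only [hφ_eq]
    rw [hh0, ← hgint σ, hsub]
    ring
  -- reflection of the convolution
  have refl : ∀ σ : ℝ, ∫ s, f s * φ (σ - s) = ∫ t, f (σ - t) * φ t := by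
    intro σ
    have h := integral_sub_left_eq_self (fun x => f x * φ (σ - x)) (volume : Measure ℝ) σ
    simp only [sub_sub_cancel] at h
    exact h.symm
  -- limits of f
  have hf_top : Tendsto f atTop (nhds 0) := by
    have he : ∀ᶠ s in atTop, ν s - ν₀p = f s := by
      filter_upwards [eventually_gt_atTop (0:ℝ)] with s hs
      simp only [hf_def, hg_def, if_neg (not_le.mpr hs)]
    exact Tendsto.congr' he (by simpa using hp.sub_const ν₀p)
  have hf_bot : Tendsto f atBot (nhds 0) := by
    have he : ∀ᶠ s in atBot, ν s - ν₀m = f s := by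
      filter_upwards [eventually_lt_atBot (0:ℝ)] with s hs
      simp only [hf_def, hg_def, if_pos hs.le]
    exact Tendsto.congr' he (by simpa using hm.sub_const ν₀m)
  -- dominated convergence
  have main : ∀ (l : Filter ℝ) [l.IsCountablyGenerated], Tendsto f l (nhds 0) →
      (∀ t : ℝ, Tendsto (fun σ : ℝ => σ - t) l l) →
      Tendsto (fun σ => ∫ t, f (σ - t) * φ t) l (nhds 0) := by
    intro l _ hfl hshift
    have h := tendsto_integral_filter_of_dominated_convergence (μ := volume)
      (F := fun σ (t : ℝ) => f (σ - t) * φ t) (f := fun _ : ℝ => (0:ℝ))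
      (bound := fun t => (M + Mg) * φ t)
      (Filter.Eventually.of_forall fun σ =>
        ((hf_meas.comp (measurable_const.sub measurable_id)).mul hφ_meas).aestronglyMeasurable)
      (Filter.Eventually.of_forall fun σ =>
        Filter.Eventually.of_forall fun t => by
          rw [Real.norm_eq_abs, abs_mul, abs_of_nonneg (hφ_nonneg t)]
          exact mul_le_mul_of_nonneg_right (hf_bdd _) (hφ_nonneg t))
      (hφ_int.const_mul _)
      (Filter.Eventually.of_forall fun t => by
        have := (hfl.comp (hshift t)).mul_const (φ t)
        simpa using this)
    simpa using h
  have hst : ∀ t : ℝ, Tendsto (fun σ : ℝ => σ - t) atTop atTop := fun t =>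
    tendsto_atTop_add_const_right atTop (-t) tendsto_id |>.congr (fun σ => by simp [sub_eq_add_neg])
  have hsb : ∀ t : ℝ, Tendsto (fun σ : ℝ => σ - t) atBot atBot := fun t =>
    tendsto_atBot_add_const_right atBot (-t) tendsto_id |>.congr (fun σ => by simp [sub_eq_add_neg])
  -- conclusion
  have heq : (fun σ : ℝ =>
      h0 ν σ ω - (ν₀m * erfc (σ / (2 * Real.sqrt ω)) + ν₀p * erfc (-(σ / (2 * Real.sqrt ω)))))
      = fun σ => C * ∫ t, f (σ - t) * φ t := by
    funext σ
    rw [← hc_def] at *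
    rw [show σ / (2 * Real.sqrt ω) = σ / c from rfl, key σ, refl σ]
  rw [heq, cocompact_eq_atBot_atTop, tendsto_sup]
  constructor
  · have := (main atBot hf_bot hsb).const_mul C
    simpa using this
  · have := (main atTop hf_top hst).const_mul C
    simpa using this
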